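/- Commutator bound for good derivatives: for each vector field Z in {∂_t, ∂₁, ∂₂, ∂₃, Ω₁, Ω₂, Ω₃, S} and each good derivative D in {∂_t + ∂_r, ∇̸₁, ∇̸₂, ∇̸₃}, the commutator satisfies the pointwise estimate |[Z, D]u(t,x)| ≤ C ( |x|^{-1} Σ_{Z'} |Z'u(t,x)| + Σ_{D'} |D'u(t,x)| ) for smooth u and x ≠ 0, where the sums run over the finite families above and C is universal. -/

import Mathlib

noncomputable section

abbrev ST3 := ℝ × EuclideanSpace ℝ (Fin 3)

def dtime (u : ST3 → ℝ) (p : ST3) : ℝ := fderiv ℝ u p (1, 0)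

def dxi (i : Fin 3) (u : ST3 → ℝ) (p : ST3) : ℝ :=
  fderiv ℝ u p (0, EuclideanSpace.single i 1)

def radDeriv (u : ST3 → ℝ) (p : ST3) : ℝ :=
  ‖p.2‖⁻¹ * ∑ i : Fin 3, p.2 i * dxi i u p

/-- The admissible vector fields `Z = (∂_t, ∂₁, ∂₂, ∂₃, Ω₁, Ω₂, Ω₃, S)`. -/
def Zvf : Unit ⊕ Fin 3 ⊕ Fin 3 ⊕ Unit → (ST3 → ℝ) → ST3 → ℝ
  | Sum.inl _ => dtime
  | Sum.inr (Sum.inl i) => dxi i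
  | Sum.inr (Sum.inr (Sum.inl j)) => fun u p =>
      ![p.2 1 * dxi 2 u p - p.2 2 * dxi 1 u p,
        p.2 2 * dxi 0 u p - p.2 0 * dxi 2 u p,
        p.2 0 * dxi 1 u p - p.2 1 * dxi 0 u p] j
  | Sum.inr (Sum.inr (Sum.inr _)) => fun u p =>
      p.1 * dtime u p + ∑ i : Fin 3, p.2 i * dxi i u p

/-- The good derivatives `(∂_t + ∂_r, ∇̸₁, ∇̸₂, ∇̸₃)`. -/
def Dgoodvf : Unit ⊕ Fin 3 → (ST3 → ℝ) → ST3 → ℝ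
  | Sum.inl _ => fun u p => dtime u p + radDeriv u p
  | Sum.inr j => fun u p => dxi j u p - (p.2 j / ‖p.2‖) * radDeriv u p

set_option maxHeartbeats 4000000


/-- time direction -/
def et : ST3 := (1, 0)
/-- spatial directions -/
def ev (i : Fin 3) : ST3 := (0, EuclideanSpace.single i 1)

/-- second directional derivative -/
def Hd (u : ST3 → ℝ) (p v w : ST3) : ℝ := fderiv ℝ (fun q => fderiv ℝ u q w) p v

lemma dtime_eq (u : ST3 → ℝ) (p : ST3) : dtime u p = fderiv ℝ u p et := rfl
lemma dxi_eq (i : Fin 3) (u : ST3 → ℝ) (p : ST3) : dxi i u p = fderiv ℝ u p (ev i) := rfl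

lemma et1 : (et).1 = 1 := rfl
lemma et2 (i : Fin 3) : (et).2 i = 0 := rfl
lemma ev1 (i : Fin 3) : (ev i).1 = 0 := rfl
lemma ev2 (i j : Fin 3) : (ev i).2 j = if j = i then 1 else 0 := by
  simp [ev, EuclideanSpace.single_apply]

lemma smooth_du {u : ST3 → ℝ} (hu : ContDiff ℝ (⊤ : ℕ∞) u) (w : ST3) :
    Differentiable ℝ (fun q => fderiv ℝ u q w) := by
  have h1 : ContDiff ℝ (⊤ : ℕ∞) (fderiv ℝ u) := hu.fderiv_right (by simp)
  have h2 : ContDiff ℝ (⊤ : ℕ∞) (fun q => fderiv ℝ u q w) := h1.clm_apply contDiff_const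
  exact h2.differentiable (by simp)

lemma Hd_symm {u : ST3 → ℝ} (hu : ContDiff ℝ (⊤ : ℕ∞) u) (p v w : ST3) :
    Hd u p v w = Hd u p w v := by
  have hdu : Differentiable ℝ u := hu.differentiable (by simp)
  have h1 : ContDiff ℝ (⊤ : ℕ∞) (fderiv ℝ u) := hu.fderiv_right (by simp)
  have hd2 : DifferentiableAt ℝ (fderiv ℝ u) p := (h1.differentiable (by simp)) p
  have hsymm := second_derivative_symmetric (f := u) (f' := fderiv ℝ u)
    (f'' := fderiv ℝ (fderiv ℝ u) p) (fun y => (hdu y).hasFDerivAt) hd2.hasFDerivAt v w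
  have key : ∀ z : ST3, Hd u p z = fun w' => (fderiv ℝ (fderiv ℝ u) p z) w' := by
    intro z
    funext w'
    have : (fun q => fderiv ℝ u q w') = fun q => (fderiv ℝ u q) w' := rfl
    rw [Hd, this, fderiv_clm_apply hd2 (differentiableAt_const w')]
    simp
  rw [key, key]
  simpa using hsymm

/-- coordinate projection -/
def pr (i : Fin 3) : ST3 →L[ℝ] ℝ :=
  (EuclideanSpace.proj i).comp (ContinuousLinearMap.snd ℝ ℝ (EuclideanSpace ℝ (Fin 3)))

lemma pr_apply (i : Fin 3) (v : ST3) : pr i v = v.2 i := rfl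

lemma hasFDerivAt_coord (i : Fin 3) (p : ST3) :
    HasFDerivAt (fun q : ST3 => q.2 i) (pr i) p := (pr i).hasFDerivAt

lemma hasFDerivAt_n2 (p : ST3) :
    HasFDerivAt (fun q : ST3 => ∑ i : Fin 3, q.2 i * q.2 i)
      (∑ i : Fin 3, (2 * p.2 i) • (pr i : ST3 →L[ℝ] ℝ)) p := by
  apply HasFDerivAt.fun_sum
  intro i _
  have h := (hasFDerivAt_coord i p).fun_mul (hasFDerivAt_coord i p)
  have e : (2 * p.2 i) • (pr i : ST3 →L[ℝ] ℝ) = p.2 i • pr i + p.2 i • pr i := by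
    rw [two_mul, add_smul]
  rw [e]
  exact h

lemma sqrt_n2 (x : EuclideanSpace ℝ (Fin 3)) :
    Real.sqrt (∑ i : Fin 3, x i * x i) = ‖x‖ := by
  rw [EuclideanSpace.norm_eq]
  congr 1
  refine Finset.sum_congr rfl fun i _ => ?_
  rw [Real.norm_eq_abs, sq_abs, sq]

lemma hasFDerivAt_nInv (p : ST3) (hp : p.2 ≠ 0) :
    HasFDerivAt (fun q : ST3 => ‖q.2‖⁻¹)
      ((-(‖p.2‖⁻¹ ^ 3)) • (∑ i : Fin 3, p.2 i • (pr i : ST3 →L[ℝ] ℝ))) p := by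
  have hr : (0:ℝ) < ‖p.2‖ := norm_pos_iff.mpr hp
  set s₀ : ℝ := ∑ i : Fin 3, p.2 i * p.2 i with hs₀
  have hsq : Real.sqrt s₀ = ‖p.2‖ := sqrt_n2 p.2
  have hs₀pos : 0 < s₀ := Real.sqrt_pos.mp (by rw [hsq]; exact hr)
  have hsqrt : HasDerivAt Real.sqrt (1 / (2 * Real.sqrt s₀)) s₀ :=
    Real.hasDerivAt_sqrt (ne_of_gt hs₀pos)
  have hne : Real.sqrt s₀ ≠ 0 := by rw [hsq]; exact ne_of_gt hr
  have hinv : HasDerivAt (fun s => (Real.sqrt s)⁻¹)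
      (-(1 / (2 * Real.sqrt s₀)) / (Real.sqrt s₀) ^ 2) s₀ := hsqrt.inv hne
  have hcomp := hinv.comp_hasFDerivAt p (hasFDerivAt_n2 p)
  have hfun : (fun q : ST3 => ‖q.2‖⁻¹)
      = fun q : ST3 => (Real.sqrt (∑ i : Fin 3, q.2 i * q.2 i))⁻¹ := by
    funext q; rw [sqrt_n2]
  rw [hfun]
  have hEq : ((-(1 / (2 * Real.sqrt s₀)) / (Real.sqrt s₀) ^ 2) •
        (∑ i : Fin 3, (2 * p.2 i) • (pr i : ST3 →L[ℝ] ℝ)))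
      = ((-(‖p.2‖⁻¹ ^ 3)) • (∑ i : Fin 3, p.2 i • (pr i : ST3 →L[ℝ] ℝ))) := by
    refine ContinuousLinearMap.ext fun v => ?_
    simp only [ContinuousLinearMap.smul_apply, ContinuousLinearMap.coe_sum',
      Finset.sum_apply, ContinuousLinearMap.coe_smul', Pi.smul_apply, smul_eq_mul,
      Finset.mul_sum, hsq]
    refine Finset.sum_congr rfl fun i _ => ?_
    have h3 : ‖p.2‖ ≠ 0 := ne_of_gt hr
    field_simp
  exact hEq ▸ hcomp

lemma Hd_def {u : ST3 → ℝ} (p v w : ST3) :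
    fderiv ℝ (fun q => fderiv ℝ u q w) p v = Hd u p v w := rfl

section Expand
variable {u : ST3 → ℝ}

lemma hasF_du (hu : ContDiff ℝ (⊤ : ℕ∞) u) (p : ST3) (w : ST3) : HasFDerivAt (fun q => fderiv ℝ u q w)
    (fderiv ℝ (fun q => fderiv ℝ u q w) p) p :=
  ((smooth_du hu w) p).hasFDerivAt

lemma hasF_S (hu : ContDiff ℝ (⊤ : ℕ∞) u) (p : ST3) : HasFDerivAt (fun q : ST3 => ∑ i : Fin 3, q.2 i * fderiv ℝ u q (ev i))
    (∑ i : Fin 3, (p.2 i • fderiv ℝ (fun q => fderiv ℝ u q (ev i)) p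
        + (fderiv ℝ u p (ev i)) • (pr i : ST3 →L[ℝ] ℝ))) p :=
  HasFDerivAt.fun_sum fun i _ => (hasFDerivAt_coord i p).fun_mul (hasF_du hu p (ev i))

lemma fderiv_D0_apply (hu : ContDiff ℝ (⊤ : ℕ∞) u) (p : ST3) (hp : p.2 ≠ 0) (v : ST3) :
    fderiv ℝ (fun q => fderiv ℝ u q et + ‖q.2‖⁻¹ * ∑ i : Fin 3, q.2 i * fderiv ℝ u q (ev i)) p v
      = Hd u p v et
        + (-(‖p.2‖⁻¹ ^ 3) * ∑ j : Fin 3, p.2 j * v.2 j) * (∑ i : Fin 3, p.2 i * fderiv ℝ u p (ev i))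
        + ‖p.2‖⁻¹ * (∑ i : Fin 3, (v.2 i * fderiv ℝ u p (ev i) + p.2 i * Hd u p v (ev i))) := by
  have htot := (hasF_du hu p et).fun_add ((hasFDerivAt_nInv p hp).fun_mul (hasF_S hu p))
  rw [htot.fderiv]
  simp only [ContinuousLinearMap.add_apply, ContinuousLinearMap.smul_apply,
    ContinuousLinearMap.coe_sum', Finset.sum_apply, ContinuousLinearMap.coe_smul',
    Pi.smul_apply, smul_eq_mul, pr_apply, Hd_def, ContinuousLinearMap.neg_apply]
  simp only [Fin.sum_univ_three]
  ring

lemma fderiv_Dj_apply (hu : ContDiff ℝ (⊤ : ℕ∞) u) (p : ST3) (hp : p.2 ≠ 0) (j : Fin 3) (v : ST3) :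
    fderiv ℝ (fun q => fderiv ℝ u q (ev j)
        - (q.2 j * ‖q.2‖⁻¹) * (‖q.2‖⁻¹ * ∑ i : Fin 3, q.2 i * fderiv ℝ u q (ev i))) p v
      = Hd u p v (ev j)
        - ((v.2 j * ‖p.2‖⁻¹ + p.2 j * (-(‖p.2‖⁻¹ ^ 3) * ∑ l : Fin 3, p.2 l * v.2 l))
              * (‖p.2‖⁻¹ * ∑ i : Fin 3, p.2 i * fderiv ℝ u p (ev i))
            + (p.2 j * ‖p.2‖⁻¹)
              * ((-(‖p.2‖⁻¹ ^ 3) * ∑ l : Fin 3, p.2 l * v.2 l)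
                    * (∑ i : Fin 3, p.2 i * fderiv ℝ u p (ev i))
                  + ‖p.2‖⁻¹ * ∑ i : Fin 3,
                      (v.2 i * fderiv ℝ u p (ev i) + p.2 i * Hd u p v (ev i)))) := by
  have htot := (hasF_du hu p (ev j)).fun_sub
    (((hasFDerivAt_coord j p).fun_mul (hasFDerivAt_nInv p hp)).fun_mul
      ((hasFDerivAt_nInv p hp).fun_mul (hasF_S hu p)))
  rw [htot.fderiv]
  simp only [ContinuousLinearMap.sub_apply, ContinuousLinearMap.add_apply,
    ContinuousLinearMap.smul_apply, ContinuousLinearMap.coe_sum', Finset.sum_apply,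
    ContinuousLinearMap.coe_smul', Pi.smul_apply, smul_eq_mul, pr_apply, Hd_def,
    ContinuousLinearMap.neg_apply]
  simp only [Fin.sum_univ_three]
  ring

lemma fderiv_rot_apply (hu : ContDiff ℝ (⊤ : ℕ∞) u) (p : ST3) (a b : Fin 3) (v : ST3) :
    fderiv ℝ (fun q : ST3 => q.2 a * fderiv ℝ u q (ev b) - q.2 b * fderiv ℝ u q (ev a)) p v
      = (v.2 a * fderiv ℝ u p (ev b) + p.2 a * Hd u p v (ev b))
        - (v.2 b * fderiv ℝ u p (ev a) + p.2 b * Hd u p v (ev a)) := by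
  have htot := ((hasFDerivAt_coord a p).fun_mul (hasF_du hu p (ev b))).fun_sub
    ((hasFDerivAt_coord b p).fun_mul (hasF_du hu p (ev a)))
  rw [htot.fderiv]
  simp only [ContinuousLinearMap.sub_apply, ContinuousLinearMap.add_apply,
    ContinuousLinearMap.smul_apply, smul_eq_mul, pr_apply, Hd_def]
  ring

lemma fderiv_Svf_apply (hu : ContDiff ℝ (⊤ : ℕ∞) u) (p : ST3) (v : ST3) :
    fderiv ℝ (fun q : ST3 => q.1 * fderiv ℝ u q et + ∑ i : Fin 3, q.2 i * fderiv ℝ u q (ev i)) p v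
      = (v.1 * fderiv ℝ u p et + p.1 * Hd u p v et)
        + ∑ i : Fin 3, (v.2 i * fderiv ℝ u p (ev i) + p.2 i * Hd u p v (ev i)) := by
  have htot := (hasFDerivAt_fst.fun_mul (hasF_du hu p et)).fun_add (hasF_S hu p)
  rw [htot.fderiv]
  simp only [ContinuousLinearMap.add_apply, ContinuousLinearMap.smul_apply,
    ContinuousLinearMap.coe_sum', Finset.sum_apply, ContinuousLinearMap.coe_smul',
    Pi.smul_apply, smul_eq_mul, pr_apply, Hd_def, ContinuousLinearMap.coe_fst']
  simp only [Fin.sum_univ_three]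
  ring

end Expand



lemma Zvf_t_fun (a0 : Unit) (u : ST3 → ℝ) :
    Zvf (Sum.inl a0) u = fun q => fderiv ℝ u q et := rfl
lemma Zvf_k_fun (k : Fin 3) (u : ST3 → ℝ) :
    Zvf (Sum.inr (Sum.inl k)) u = fun q => fderiv ℝ u q (ev k) := rfl
lemma Zvf_r0_fun (u : ST3 → ℝ) :
    Zvf (Sum.inr (Sum.inr (Sum.inl 0))) u
      = fun q => q.2 1 * fderiv ℝ u q (ev 2) - q.2 2 * fderiv ℝ u q (ev 1) := rfl
lemma Zvf_r1_fun (u : ST3 → ℝ) :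
    Zvf (Sum.inr (Sum.inr (Sum.inl 1))) u
      = fun q => q.2 2 * fderiv ℝ u q (ev 0) - q.2 0 * fderiv ℝ u q (ev 2) := rfl
lemma Zvf_r2_fun (u : ST3 → ℝ) :
    Zvf (Sum.inr (Sum.inr (Sum.inl 2))) u
      = fun q => q.2 0 * fderiv ℝ u q (ev 1) - q.2 1 * fderiv ℝ u q (ev 0) := rfl
lemma Zvf_s_fun (a0 : Unit) (u : ST3 → ℝ) :
    Zvf (Sum.inr (Sum.inr (Sum.inr a0))) u
      = fun q => q.1 * fderiv ℝ u q et + ∑ i : Fin 3, q.2 i * fderiv ℝ u q (ev i) := rfl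
lemma Dgoodvf_0_fun (d0 : Unit) (u : ST3 → ℝ) :
    Dgoodvf (Sum.inl d0) u
      = fun q => fderiv ℝ u q et + ‖q.2‖⁻¹ * ∑ i : Fin 3, q.2 i * fderiv ℝ u q (ev i) := rfl
lemma Dgoodvf_j_fun (j : Fin 3) (u : ST3 → ℝ) :
    Dgoodvf (Sum.inr j) u
      = fun q => fderiv ℝ u q (ev j)
          - (q.2 j * ‖q.2‖⁻¹) * (‖q.2‖⁻¹ * ∑ i : Fin 3, q.2 i * fderiv ℝ u q (ev i)) := rfl

lemma sum3_bound (a0 a1 a2 b0 b1 b2 M : ℝ) (ha0 : |a0| ≤ 1) (ha1 : |a1| ≤ 1) (ha2 : |a2| ≤ 1)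
    (hb0 : |b0| ≤ M) (hb1 : |b1| ≤ M) (hb2 : |b2| ≤ M) (hM : 0 ≤ M) :
    |a0 * b0 + a1 * b1 + a2 * b2| ≤ 3 * M := by
  have h0 : |a0 * b0| ≤ M := by
    rw [abs_mul]; nlinarith [abs_nonneg a0, abs_nonneg b0]
  have h1 : |a1 * b1| ≤ M := by
    rw [abs_mul]; nlinarith [abs_nonneg a1, abs_nonneg b1]
  have h2 : |a2 * b2| ≤ M := by
    rw [abs_mul]; nlinarith [abs_nonneg a2, abs_nonneg b2]
  calc |a0 * b0 + a1 * b1 + a2 * b2| ≤ |a0 * b0 + a1 * b1| + |a2 * b2| := abs_add_le _ _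
    _ ≤ |a0 * b0| + |a1 * b1| + |a2 * b2| := by linarith [abs_add_le (a0 * b0) (a1 * b1)]
    _ ≤ 3 * M := by linarith

lemma case_bound_3 (nn SZ SD R Dk δ xj xk : ℝ) (hnn : 0 ≤ nn) (hδ : |δ| ≤ 1)
    (hxj : |xj * nn| ≤ 1) (hxk : |xk * nn| ≤ 1) (hR : |nn * R| ≤ 3 * SZ) (hDk : |Dk| ≤ 4 * SZ)
    (hSZ : 0 ≤ SZ) (hSD : 0 ≤ SD) :
    |(-((nn * (δ - xj * xk * (nn * nn))) * (nn * R)) - (xj * (nn * nn)) * Dk)|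
      ≤ 100 * (nn * SZ + SD) := by
  have hc : |δ - xj * xk * (nn * nn)| ≤ 2 := by
    have heq : xj * xk * (nn * nn) = (xj * nn) * (xk * nn) := by ring
    have h1 : |xj * xk * (nn * nn)| ≤ 1 := by
      rw [heq, abs_mul]
      nlinarith [abs_nonneg (xj * nn), abs_nonneg (xk * nn)]
    calc |δ - xj * xk * (nn * nn)| ≤ |δ| + |xj * xk * (nn * nn)| := abs_sub _ _
      _ ≤ 2 := by linarith
  have hA : |(nn * (δ - xj * xk * (nn * nn))) * (nn * R)| ≤ nn * (6 * SZ) := by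
    rw [abs_mul, abs_mul, abs_of_nonneg hnn]
    have h2 : |δ - xj * xk * (nn * nn)| * |nn * R| ≤ 2 * (3 * SZ) :=
      mul_le_mul hc hR (abs_nonneg _) (by norm_num)
    calc nn * |δ - xj * xk * (nn * nn)| * |nn * R|
        = nn * (|δ - xj * xk * (nn * nn)| * |nn * R|) := by ring
      _ ≤ nn * (2 * (3 * SZ)) := mul_le_mul_of_nonneg_left h2 hnn
      _ = nn * (6 * SZ) := by ring
  have hB : |(xj * (nn * nn)) * Dk| ≤ nn * (4 * SZ) := by
    have heq : (xj * (nn * nn)) * Dk = (xj * nn) * (nn * Dk) := by ring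
    have h3 : nn * |Dk| ≤ nn * (4 * SZ) := mul_le_mul_of_nonneg_left hDk hnn
    have h4 : 0 ≤ nn * |Dk| := mul_nonneg hnn (abs_nonneg _)
    calc |(xj * (nn * nn)) * Dk| = |xj * nn| * (nn * |Dk|) := by
          rw [heq, abs_mul (xj * nn) (nn * Dk), abs_mul nn Dk, abs_of_nonneg hnn]
      _ ≤ 1 * (nn * (4 * SZ)) := mul_le_mul hxj h3 h4 zero_le_one
      _ = nn * (4 * SZ) := one_mul _
  have htri : |(-((nn * (δ - xj * xk * (nn * nn))) * (nn * R)) - (xj * (nn * nn)) * Dk)|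
      ≤ |(nn * (δ - xj * xk * (nn * nn))) * (nn * R)| + |(xj * (nn * nn)) * Dk| := by
    have : (-((nn * (δ - xj * xk * (nn * nn))) * (nn * R)) - (xj * (nn * nn)) * Dk)
        = -(((nn * (δ - xj * xk * (nn * nn))) * (nn * R)) + (xj * (nn * nn)) * Dk) := by ring
    rw [this, abs_neg]
    exact abs_add_le _ _
  nlinarith [mul_nonneg hnn hSZ, htri, hA, hB, hSD]

/-- Commutator bound for good derivatives: for every admissible vector field `Z` and good
derivative `D`, `|[Z,D]u| ≤ C(r⁻¹ Σ|Z'u| + Σ|D'u|)` pointwise for `x ≠ 0`. -/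
theorem good_derivative_commutator_bound :
    ∃ C > 0, ∀ u : ST3 → ℝ, ContDiff ℝ (⊤ : ℕ∞) u → ∀ p : ST3, p.2 ≠ 0 →
      ∀ (a : Unit ⊕ Fin 3 ⊕ Fin 3 ⊕ Unit) (d : Unit ⊕ Fin 3),
        |Zvf a (Dgoodvf d u) p - Dgoodvf d (Zvf a u) p|
          ≤ C * (‖p.2‖⁻¹ * (∑ a' : Unit ⊕ Fin 3 ⊕ Fin 3 ⊕ Unit, |Zvf a' u p|) +
              ∑ d' : Unit ⊕ Fin 3, |Dgoodvf d' u p|) := by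
  refine ⟨100, by norm_num, ?_⟩
  intro u hu p hp a d
  have hr : 0 < ‖p.2‖ := norm_pos_iff.mpr hp
  have hrne : ‖p.2‖ ≠ 0 := ne_of_gt hr
  have hn : (0:ℝ) ≤ ‖p.2‖⁻¹ := by positivity
  have hsym : ∀ v w, Hd u p v w = Hd u p w v := Hd_symm hu p
  have hst : ∀ i : Fin 3, Hd u p (ev i) et = Hd u p et (ev i) := fun i => hsym (ev i) et
  have hs10 : Hd u p (ev 1) (ev 0) = Hd u p (ev 0) (ev 1) := hsym _ _
  have hs20 : Hd u p (ev 2) (ev 0) = Hd u p (ev 0) (ev 2) := hsym _ _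
  have hs21 : Hd u p (ev 2) (ev 1) = Hd u p (ev 1) (ev 2) := hsym _ _
  have hr2 : ‖p.2‖ ^ 2 = p.2 0 * p.2 0 + p.2 1 * p.2 1 + p.2 2 * p.2 2 := by
    rw [← sqrt_n2 p.2, Real.sq_sqrt (Finset.sum_nonneg fun i _ => mul_self_nonneg _)]
    exact Fin.sum_univ_three _
  have hr2inv : ‖p.2‖⁻¹ ^ 2 * (p.2 0 * p.2 0 + p.2 1 * p.2 1 + p.2 2 * p.2 2) = 1 := by
    rw [← hr2]
    field_simp
  have hr2sum : ‖p.2‖ ^ 2 = ∑ j : Fin 3, p.2 j * p.2 j := by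
    rw [← sqrt_n2 p.2, Real.sq_sqrt (Finset.sum_nonneg fun i _ => mul_self_nonneg _)]
  have hxr : ∀ i : Fin 3, |p.2 i| ≤ ‖p.2‖ := by
    intro i
    have h1 : p.2 i * p.2 i ≤ ‖p.2‖ ^ 2 := by
      rw [hr2sum]
      exact Finset.single_le_sum (f := fun j => p.2 j * p.2 j)
        (fun j _ => mul_self_nonneg _) (Finset.mem_univ i)
    nlinarith [abs_nonneg (p.2 i), sq_abs (p.2 i), hr]
  have hxn : ∀ i : Fin 3, |p.2 i * ‖p.2‖⁻¹| ≤ 1 := by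
    intro i
    rw [abs_mul, abs_inv, abs_norm]
    have h2 := mul_le_mul_of_nonneg_right (hxr i) hn
    rwa [mul_inv_cancel₀ hrne] at h2
  obtain ⟨SZ, hSZdef⟩ : ∃ SZ, (∑ a' : Unit ⊕ Fin 3 ⊕ Fin 3 ⊕ Unit, |Zvf a' u p|) = SZ := ⟨_, rfl⟩
  obtain ⟨SD, hSDdef⟩ : ∃ SD, (∑ d' : Unit ⊕ Fin 3, |Dgoodvf d' u p|) = SD := ⟨_, rfl⟩
  rw [hSZdef, hSDdef]
  have hZle : ∀ a', |Zvf a' u p| ≤ SZ := by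
    intro a'
    rw [← hSZdef]
    exact Finset.single_le_sum (f := fun a' => |Zvf a' u p|) (fun i _ => abs_nonneg _)
      (Finset.mem_univ a')
  have hDle : ∀ d', |Dgoodvf d' u p| ≤ SD := by
    intro d'
    rw [← hSDdef]
    exact Finset.single_le_sum (f := fun d' => |Dgoodvf d' u p|) (fun i _ => abs_nonneg _)
      (Finset.mem_univ d')
  have hSZnn : 0 ≤ SZ := le_trans (abs_nonneg _) (hZle (Sum.inl ()))
  have hSDnn : 0 ≤ SD := le_trans (abs_nonneg _) (hDle (Sum.inl ()))
  have hP : ∀ i : Fin 3, |fderiv ℝ u p (ev i)| ≤ SZ := fun i => hZle (Sum.inr (Sum.inl i))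
  have hPt : |fderiv ℝ u p et| ≤ SZ := hZle (Sum.inl ())
  have hD0val : Dgoodvf (Sum.inl ()) u p = fderiv ℝ u p et
      + ‖p.2‖⁻¹ * (p.2 0 * fderiv ℝ u p (ev 0) + p.2 1 * fderiv ℝ u p (ev 1)
        + p.2 2 * fderiv ℝ u p (ev 2)) := by
    show fderiv ℝ u p et + ‖p.2‖⁻¹ * ∑ i : Fin 3, p.2 i * fderiv ℝ u p (ev i) = _
    rw [Fin.sum_univ_three]
  have hDval : ∀ k : Fin 3, Dgoodvf (Sum.inr k) u p = fderiv ℝ u p (ev k)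
      - (p.2 k * ‖p.2‖⁻¹) * (‖p.2‖⁻¹ * (p.2 0 * fderiv ℝ u p (ev 0)
        + p.2 1 * fderiv ℝ u p (ev 1) + p.2 2 * fderiv ℝ u p (ev 2))) := by
    intro k
    show fderiv ℝ u p (ev k) - (p.2 k * ‖p.2‖⁻¹) * (‖p.2‖⁻¹ * ∑ i : Fin 3, p.2 i * fderiv ℝ u p (ev i)) = _
    rw [Fin.sum_univ_three]
  have hSx3 : |‖p.2‖⁻¹ * (p.2 0 * fderiv ℝ u p (ev 0) + p.2 1 * fderiv ℝ u p (ev 1)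
      + p.2 2 * fderiv ℝ u p (ev 2))| ≤ 3 * SZ := by
    have heq : ‖p.2‖⁻¹ * (p.2 0 * fderiv ℝ u p (ev 0) + p.2 1 * fderiv ℝ u p (ev 1)
        + p.2 2 * fderiv ℝ u p (ev 2))
      = (p.2 0 * ‖p.2‖⁻¹) * fderiv ℝ u p (ev 0) + (p.2 1 * ‖p.2‖⁻¹) * fderiv ℝ u p (ev 1)
        + (p.2 2 * ‖p.2‖⁻¹) * fderiv ℝ u p (ev 2) := by ring
    rw [heq]
    exact sum3_bound _ _ _ _ _ _ _ (hxn 0) (hxn 1) (hxn 2) (hP 0) (hP 1) (hP 2) hSZnn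
  have hDk4 : ∀ k : Fin 3, |Dgoodvf (Sum.inr k) u p| ≤ 4 * SZ := by
    intro k
    rw [hDval k]
    have h1 : |(p.2 k * ‖p.2‖⁻¹) * (‖p.2‖⁻¹ * (p.2 0 * fderiv ℝ u p (ev 0)
        + p.2 1 * fderiv ℝ u p (ev 1) + p.2 2 * fderiv ℝ u p (ev 2)))| ≤ 3 * SZ := by
      rw [abs_mul]
      nlinarith [hxn k, hSx3, abs_nonneg (p.2 k * ‖p.2‖⁻¹),
        abs_nonneg (‖p.2‖⁻¹ * (p.2 0 * fderiv ℝ u p (ev 0) + p.2 1 * fderiv ℝ u p (ev 1)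
          + p.2 2 * fderiv ℝ u p (ev 2)))]
    calc |fderiv ℝ u p (ev k) - (p.2 k * ‖p.2‖⁻¹) * (‖p.2‖⁻¹ * (p.2 0 * fderiv ℝ u p (ev 0)
          + p.2 1 * fderiv ℝ u p (ev 1) + p.2 2 * fderiv ℝ u p (ev 2)))|
        ≤ |fderiv ℝ u p (ev k)| + |(p.2 k * ‖p.2‖⁻¹) * (‖p.2‖⁻¹ * (p.2 0 * fderiv ℝ u p (ev 0)
          + p.2 1 * fderiv ℝ u p (ev 1) + p.2 2 * fderiv ℝ u p (ev 2)))| := abs_sub _ _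
      _ ≤ 4 * SZ := by have := hP k; linarith
  have hFin : ∀ i : Fin 3, i = 0 ∨ i = 1 ∨ i = 2 := by decide
  rcases a with a0 | ak | aj | as'
  · rcases d with d0 | dj
    · have key : Zvf (Sum.inl a0) (Dgoodvf (Sum.inl d0) u) p - Dgoodvf (Sum.inl d0) (Zvf (Sum.inl a0) u) p = 0 := by
        simp only [Zvf_t_fun, Dgoodvf_0_fun]
        simp only [fderiv_D0_apply hu p hp, Hd_def]
        simp only [Fin.sum_univ_three, et1, et2, ev1, ev2, Fin.reduceEq, reduceIte]
        norm_num [hst, hs10, hs20, hs21]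
        all_goals ring
      rw [key]
      simp only [abs_zero]
      nlinarith [mul_nonneg hn hSZnn, hSDnn]
    · rcases hFin dj with rfl | rfl | rfl
      · have key : Zvf (Sum.inl a0) (Dgoodvf (Sum.inr (0 : Fin 3)) u) p - Dgoodvf (Sum.inr (0 : Fin 3)) (Zvf (Sum.inl a0) u) p = 0 := by
          simp only [Zvf_t_fun, Dgoodvf_j_fun]
          simp only [fderiv_Dj_apply hu p hp, Hd_def]
          simp only [Fin.sum_univ_three, et1, et2, ev1, ev2, Fin.reduceEq, reduceIte]
          norm_num [hst, hs10, hs20, hs21]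
          all_goals ring
        rw [key]
        simp only [abs_zero]
        nlinarith [mul_nonneg hn hSZnn, hSDnn]
      · have key : Zvf (Sum.inl a0) (Dgoodvf (Sum.inr (1 : Fin 3)) u) p - Dgoodvf (Sum.inr (1 : Fin 3)) (Zvf (Sum.inl a0) u) p = 0 := by
          simp only [Zvf_t_fun, Dgoodvf_j_fun]
          simp only [fderiv_Dj_apply hu p hp, Hd_def]
          simp only [Fin.sum_univ_three, et1, et2, ev1, ev2, Fin.reduceEq, reduceIte]
          norm_num [hst, hs10, hs20, hs21]
          all_goals ring
        rw [key]
        simp only [abs_zero]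
        nlinarith [mul_nonneg hn hSZnn, hSDnn]
      · have key : Zvf (Sum.inl a0) (Dgoodvf (Sum.inr (2 : Fin 3)) u) p - Dgoodvf (Sum.inr (2 : Fin 3)) (Zvf (Sum.inl a0) u) p = 0 := by
          simp only [Zvf_t_fun, Dgoodvf_j_fun]
          simp only [fderiv_Dj_apply hu p hp, Hd_def]
          simp only [Fin.sum_univ_three, et1, et2, ev1, ev2, Fin.reduceEq, reduceIte]
          norm_num [hst, hs10, hs20, hs21]
          all_goals ring
        rw [key]
        simp only [abs_zero]
        nlinarith [mul_nonneg hn hSZnn, hSDnn]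
  · rcases hFin ak with rfl | rfl | rfl
    · rcases d with d0 | dj
      · have key : Zvf (Sum.inr (Sum.inl (0 : Fin 3))) (Dgoodvf (Sum.inl d0) u) p - Dgoodvf (Sum.inl d0) (Zvf (Sum.inr (Sum.inl (0 : Fin 3))) u) p = ‖p.2‖⁻¹ * (fderiv ℝ u p (ev 0) - (p.2 0 * ‖p.2‖⁻¹) * (‖p.2‖⁻¹ * (p.2 0 * fderiv ℝ u p (ev 0) + p.2 1 * fderiv ℝ u p (ev 1) + p.2 2 * fderiv ℝ u p (ev 2)))) := by
          simp only [Zvf_k_fun, Dgoodvf_0_fun]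
          simp only [fderiv_D0_apply hu p hp, Hd_def]
          simp only [Fin.sum_univ_three, et1, et2, ev1, ev2, Fin.reduceEq, reduceIte]
          norm_num [hst, hs10, hs20, hs21]
          all_goals ring
        rw [key]
        rw [← hDval 0, abs_mul, abs_inv, abs_norm]
        nlinarith [mul_le_mul_of_nonneg_left (hDk4 0) hn, mul_nonneg hn hSZnn, hSDnn]
      · rcases hFin dj with rfl | rfl | rfl
        · have key : Zvf (Sum.inr (Sum.inl (0 : Fin 3))) (Dgoodvf (Sum.inr (0 : Fin 3)) u) p - Dgoodvf (Sum.inr (0 : Fin 3)) (Zvf (Sum.inr (Sum.inl (0 : Fin 3))) u) p = -((‖p.2‖⁻¹ * ((1:ℝ) - p.2 0 * p.2 0 * (‖p.2‖⁻¹ * ‖p.2‖⁻¹))) * (‖p.2‖⁻¹ * (p.2 0 * fderiv ℝ u p (ev 0) + p.2 1 * fderiv ℝ u p (ev 1) + p.2 2 * fderiv ℝ u p (ev 2)))) - (p.2 0 * (‖p.2‖⁻¹ * ‖p.2‖⁻¹)) * (fderiv ℝ u p (ev 0) - (p.2 0 * ‖p.2‖⁻¹) * (‖p.2‖⁻¹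 * (p.2 0 * fderiv ℝ u p (ev 0) + p.2 1 * fderiv ℝ u p (ev 1) + p.2 2 * fderiv ℝ u p (ev 2)))) := by
            simp only [Zvf_k_fun, Dgoodvf_j_fun]
            simp only [fderiv_Dj_apply hu p hp, Hd_def]
            simp only [Fin.sum_univ_three, et1, et2, ev1, ev2, Fin.reduceEq, reduceIte]
            norm_num [hst, hs10, hs20, hs21]
            all_goals ring
          rw [key]
          exact case_bound_3 _ _ _ _ _ _ _ _ hn (by norm_num) (hxn 0) (hxn 0) hSx3 (hDval 0 ▸ hDk4 0) hSZnn hSDnn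
        · have key : Zvf (Sum.inr (Sum.inl (0 : Fin 3))) (Dgoodvf (Sum.inr (1 : Fin 3)) u) p - Dgoodvf (Sum.inr (1 : Fin 3)) (Zvf (Sum.inr (Sum.inl (0 : Fin 3))) u) p = -((‖p.2‖⁻¹ * ((0:ℝ) - p.2 1 * p.2 0 * (‖p.2‖⁻¹ * ‖p.2‖⁻¹))) * (‖p.2‖⁻¹ * (p.2 0 * fderiv ℝ u p (ev 0) + p.2 1 * fderiv ℝ u p (ev 1) + p.2 2 * fderiv ℝ u p (ev 2)))) - (p.2 1 * (‖p.2‖⁻¹ * ‖p.2‖⁻¹)) * (fderiv ℝ u p (ev 0) - (p.2 0 * ‖p.2‖⁻¹) * (‖p.2‖⁻¹ * (p.2 0 * fderiv ℝ u p (ev 0) + p.2 1 * fderiv ℝ u p (ev 1) + p.2 2 * fderiv ℝ u p (ev 2)))) := by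
            simp only [Zvf_k_fun, Dgoodvf_j_fun]
            simp only [fderiv_Dj_apply hu p hp, Hd_def]
            simp only [Fin.sum_univ_three, et1, et2, ev1, ev2, Fin.reduceEq, reduceIte]
            norm_num [hst, hs10, hs20, hs21]
            all_goals ring
          rw [key]
          exact case_bound_3 _ _ _ _ _ _ _ _ hn (by norm_num) (hxn 1) (hxn 0) hSx3 (hDval 0 ▸ hDk4 0) hSZnn hSDnn
        · have key : Zvf (Sum.inr (Sum.inl (0 : Fin 3))) (Dgoodvf (Sum.inr (2 : Fin 3)) u) p - Dgoodvf (Sum.inr (2 : Fin 3)) (Zvf (Sum.inr (Sum.inl (0 : Fin 3))) u) p = -((‖p.2‖⁻¹ * ((0:ℝ) - p.2 2 * p.2 0 * (‖p.2‖⁻¹ * ‖p.2‖⁻¹))) * (‖p.2‖⁻¹ * (p.2 0 * fderiv ℝ u p (ev 0) + p.2 1 * fderiv ℝ u p (ev 1) + p.2 2 * fderiv ℝ u p (ev 2)))) - (p.2 2 * (‖p.2‖⁻¹ * ‖p.2‖⁻¹)) * (fderiv ℝ u p (ev 0) - (p.2 0 * ‖p.2‖⁻¹) * (‖p.2‖⁻¹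 * (p.2 0 * fderiv ℝ u p (ev 0) + p.2 1 * fderiv ℝ u p (ev 1) + p.2 2 * fderiv ℝ u p (ev 2)))) := by
            simp only [Zvf_k_fun, Dgoodvf_j_fun]
            simp only [fderiv_Dj_apply hu p hp, Hd_def]
            simp only [Fin.sum_univ_three, et1, et2, ev1, ev2, Fin.reduceEq, reduceIte]
            norm_num [hst, hs10, hs20, hs21]
            all_goals ring
          rw [key]
          exact case_bound_3 _ _ _ _ _ _ _ _ hn (by norm_num) (hxn 2) (hxn 0) hSx3 (hDval 0 ▸ hDk4 0) hSZnn hSDnn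
    · rcases d with d0 | dj
      · have key : Zvf (Sum.inr (Sum.inl (1 : Fin 3))) (Dgoodvf (Sum.inl d0) u) p - Dgoodvf (Sum.inl d0) (Zvf (Sum.inr (Sum.inl (1 : Fin 3))) u) p = ‖p.2‖⁻¹ * (fderiv ℝ u p (ev 1) - (p.2 1 * ‖p.2‖⁻¹) * (‖p.2‖⁻¹ * (p.2 0 * fderiv ℝ u p (ev 0) + p.2 1 * fderiv ℝ u p (ev 1) + p.2 2 * fderiv ℝ u p (ev 2)))) := by
          simp only [Zvf_k_fun, Dgoodvf_0_fun]
          simp only [fderiv_D0_apply hu p hp, Hd_def]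
          simp only [Fin.sum_univ_three, et1, et2, ev1, ev2, Fin.reduceEq, reduceIte]
          norm_num [hst, hs10, hs20, hs21]
          all_goals ring
        rw [key]
        rw [← hDval 1, abs_mul, abs_inv, abs_norm]
        nlinarith [mul_le_mul_of_nonneg_left (hDk4 1) hn, mul_nonneg hn hSZnn, hSDnn]
      · rcases hFin dj with rfl | rfl | rfl
        · have key : Zvf (Sum.inr (Sum.inl (1 : Fin 3))) (Dgoodvf (Sum.inr (0 : Fin 3)) u) p - Dgoodvf (Sum.inr (0 : Fin 3)) (Zvf (Sum.inr (Sum.inl (1 : Fin 3))) u) p = -((‖p.2‖⁻¹ * ((0:ℝ) - p.2 0 * p.2 1 * (‖p.2‖⁻¹ * ‖p.2‖⁻¹))) * (‖p.2‖⁻¹ * (p.2 0 * fderiv ℝ u p (ev 0) + p.2 1 * fderiv ℝ u p (ev 1) + p.2 2 * fderiv ℝ u p (ev 2)))) - (p.2 0 * (‖p.2‖⁻¹ * ‖p.2‖⁻¹)) * (fderiv ℝ u p (ev 1) - (p.2 1 * ‖p.2‖⁻¹) * (‖p.2‖⁻¹ * (p.2 0 * fderiv ℝ u p (ev 0) + p.2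 1 * fderiv ℝ u p (ev 1) + p.2 2 * fderiv ℝ u p (ev 2)))) := by
            simp only [Zvf_k_fun, Dgoodvf_j_fun]
            simp only [fderiv_Dj_apply hu p hp, Hd_def]
            simp only [Fin.sum_univ_three, et1, et2, ev1, ev2, Fin.reduceEq, reduceIte]
            norm_num [hst, hs10, hs20, hs21]
            all_goals ring
          rw [key]
          exact case_bound_3 _ _ _ _ _ _ _ _ hn (by norm_num) (hxn 0) (hxn 1) hSx3 (hDval 1 ▸ hDk4 1) hSZnn hSDnn
        · have key : Zvf (Sum.inr (Sum.inl (1 : Fin 3))) (Dgoodvf (Sum.inr (1 : Fin 3)) u) p - Dgoodvf (Sum.inr (1 : Fin 3)) (Zvf (Sum.inr (Sum.inl (1 : Fin 3))) u) p = -((‖p.2‖⁻¹ * ((1:ℝ) - p.2 1 * p.2 1 * (‖p.2‖⁻¹ * ‖p.2‖⁻¹))) * (‖p.2‖⁻¹ * (p.2 0 * fderiv ℝ u p (ev 0) + p.2 1 * fderiv ℝ u p (ev 1) + p.2 2 * fderiv ℝ u p (ev 2)))) - (p.2 1 * (‖p.2‖⁻¹ * ‖p.2‖⁻¹)) * (fderiv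 ℝ u p (ev 1) - (p.2 1 * ‖p.2‖⁻¹) * (‖p.2‖⁻¹ * (p.2 0 * fderiv ℝ u p (ev 0) + p.2 1 * fderiv ℝ u p (ev 1) + p.2 2 * fderiv ℝ u p (ev 2)))) := by
            simp only [Zvf_k_fun, Dgoodvf_j_fun]
            simp only [fderiv_Dj_apply hu p hp, Hd_def]
            simp only [Fin.sum_univ_three, et1, et2, ev1, ev2, Fin.reduceEq, reduceIte]
            norm_num [hst, hs10, hs20, hs21]
            all_goals ring
          rw [key]
          exact case_bound_3 _ _ _ _ _ _ _ _ hn (by norm_num) (hxn 1) (hxn 1) hSx3 (hDval 1 ▸ hDk4 1) hSZnn hSDnn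
        · have key : Zvf (Sum.inr (Sum.inl (1 : Fin 3))) (Dgoodvf (Sum.inr (2 : Fin 3)) u) p - Dgoodvf (Sum.inr (2 : Fin 3)) (Zvf (Sum.inr (Sum.inl (1 : Fin 3))) u) p = -((‖p.2‖⁻¹ * ((0:ℝ) - p.2 2 * p.2 1 * (‖p.2‖⁻¹ * ‖p.2‖⁻¹))) * (‖p.2‖⁻¹ * (p.2 0 * fderiv ℝ u p (ev 0) + p.2 1 * fderiv ℝ u p (ev 1) + p.2 2 * fderiv ℝ u p (ev 2)))) - (p.2 2 * (‖p.2‖⁻¹ * ‖p.2‖⁻¹)) * (fderiv ℝ u p (ev 1) - (p.2 1 * ‖p.2‖⁻¹) * (‖p.2‖⁻¹ * (p.2 0 * fderiv ℝ u p (ev 0) + p.2 1 * fderiv ℝ u p (ev 1) + p.2 2 * fderiv ℝ u p (ev 2)))) := by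
            simp only [Zvf_k_fun, Dgoodvf_j_fun]
            simp only [fderiv_Dj_apply hu p hp, Hd_def]
            simp only [Fin.sum_univ_three, et1, et2, ev1, ev2, Fin.reduceEq, reduceIte]
            norm_num [hst, hs10, hs20, hs21]
            all_goals ring
          rw [key]
          exact case_bound_3 _ _ _ _ _ _ _ _ hn (by norm_num) (hxn 2) (hxn 1) hSx3 (hDval 1 ▸ hDk4 1) hSZnn hSDnn
    · rcases d with d0 | dj
      · have key : Zvf (Sum.inr (Sum.inl (2 : Fin 3))) (Dgoodvf (Sum.inl d0) u) p - Dgoodvf (Sum.inl d0) (Zvf (Sum.inr (Sum.inl (2 : Fin 3))) u) p = ‖p.2‖⁻¹ * (fderiv ℝ u p (ev 2) - (p.2 2 * ‖p.2‖⁻¹) * (‖p.2‖⁻¹ * (p.2 0 * fderiv ℝ u p (ev 0) + p.2 1 * fderiv ℝ u p (ev 1) + p.2 2 * fderiv ℝ u p (ev 2)))) := by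
          simp only [Zvf_k_fun, Dgoodvf_0_fun]
          simp only [fderiv_D0_apply hu p hp, Hd_def]
          simp only [Fin.sum_univ_three, et1, et2, ev1, ev2, Fin.reduceEq, reduceIte]
          norm_num [hst, hs10, hs20, hs21]
          all_goals ring
        rw [key]
        rw [← hDval 2, abs_mul, abs_inv, abs_norm]
        nlinarith [mul_le_mul_of_nonneg_left (hDk4 2) hn, mul_nonneg hn hSZnn, hSDnn]
      · rcases hFin dj with rfl | rfl | rfl
        · have key : Zvf (Sum.inr (Sum.inl (2 : Fin 3))) (Dgoodvf (Sum.inr (0 : Fin 3)) u) p - Dgoodvf (Sum.inr (0 : Fin 3)) (Zvf (Sum.inr (Sum.inl (2 : Fin 3))) u) p = -((‖p.2‖⁻¹ * ((0:ℝ) - p.2 0 * p.2 2 * (‖p.2‖⁻¹ * ‖p.2‖⁻¹))) * (‖p.2‖⁻¹ * (p.2 0 * fderiv ℝ u p (ev 0) + p.2 1 * fderiv ℝ u p (ev 1) + p.2 2 * fderiv ℝ u p (ev 2)))) - (p.2 0 * (‖p.2‖⁻¹ * ‖p.2‖⁻¹)) * (fderiv ℝ u p (ev 2) - (p.2 2 *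 ‖p.2‖⁻¹) * (‖p.2‖⁻¹ * (p.2 0 * fderiv ℝ u p (ev 0) + p.2 1 * fderiv ℝ u p (ev 1) + p.2 2 * fderiv ℝ u p (ev 2)))) := by
            simp only [Zvf_k_fun, Dgoodvf_j_fun]
            simp only [fderiv_Dj_apply hu p hp, Hd_def]
            simp only [Fin.sum_univ_three, et1, et2, ev1, ev2, Fin.reduceEq, reduceIte]
            norm_num [hst, hs10, hs20, hs21]
            all_goals ring
          rw [key]
          exact case_bound_3 _ _ _ _ _ _ _ _ hn (by norm_num) (hxn 0) (hxn 2) hSx3 (hDval 2 ▸ hDk4 2) hSZnn hSDnn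
        · have key : Zvf (Sum.inr (Sum.inl (2 : Fin 3))) (Dgoodvf (Sum.inr (1 : Fin 3)) u) p - Dgoodvf (Sum.inr (1 : Fin 3)) (Zvf (Sum.inr (Sum.inl (2 : Fin 3))) u) p = -((‖p.2‖⁻¹ * ((0:ℝ) - p.2 1 * p.2 2 * (‖p.2‖⁻¹ * ‖p.2‖⁻¹))) * (‖p.2‖⁻¹ * (p.2 0 * fderiv ℝ u p (ev 0) + p.2 1 * fderiv ℝ u p (ev 1) + p.2 2 * fderiv ℝ u p (ev 2)))) - (p.2 1 * (‖p.2‖⁻¹ * ‖p.2‖⁻¹)) * (fderiv ℝ u p (ev 2) - (p.2 2 * ‖p.2‖⁻¹) * (‖p.2‖⁻¹ * (p.2 0 * fderiv ℝ u p (ev 0) + p.2 1 * fderiv ℝ u p (ev 1) + p.2 2 * fderiv ℝ u p (ev 2)))) := by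
            simp only [Zvf_k_fun, Dgoodvf_j_fun]
            simp only [fderiv_Dj_apply hu p hp, Hd_def]
            simp only [Fin.sum_univ_three, et1, et2, ev1, ev2, Fin.reduceEq, reduceIte]
            norm_num [hst, hs10, hs20, hs21]
            all_goals ring
          rw [key]
          exact case_bound_3 _ _ _ _ _ _ _ _ hn (by norm_num) (hxn 1) (hxn 2) hSx3 (hDval 2 ▸ hDk4 2) hSZnn hSDnn
        · have key : Zvf (Sum.inr (Sum.inl (2 : Fin 3))) (Dgoodvf (Sum.inr (2 : Fin 3)) u) p - Dgoodvf (Sum.inr (2 : Fin 3)) (Zvf (Sum.inr (Sum.inl (2 : Fin 3))) u) p = -((‖p.2‖⁻¹ * ((1:ℝ) - p.2 2 * p.2 2 * (‖p.2‖⁻¹ * ‖p.2‖⁻¹))) * (‖p.2‖⁻¹ * (p.2 0 * fderiv ℝ u p (ev 0) + p.2 1 * fderiv ℝ u p (ev 1) + p.2 2 * fderiv ℝ u p (ev 2)))) - (p.2 2 * (‖p.2‖⁻¹ * ‖p.2‖⁻¹)) * (fderiv ℝ u p (ev 2) - (p.2 2 * ‖p.2‖⁻¹) * (‖p.2‖⁻¹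 * (p.2 0 * fderiv ℝ u p (ev 0) + p.2 1 * fderiv ℝ u p (ev 1) + p.2 2 * fderiv ℝ u p (ev 2)))) := by
            simp only [Zvf_k_fun, Dgoodvf_j_fun]
            simp only [fderiv_Dj_apply hu p hp, Hd_def]
            simp only [Fin.sum_univ_three, et1, et2, ev1, ev2, Fin.reduceEq, reduceIte]
            norm_num [hst, hs10, hs20, hs21]
            all_goals ring
          rw [key]
          exact case_bound_3 _ _ _ _ _ _ _ _ hn (by norm_num) (hxn 2) (hxn 2) hSx3 (hDval 2 ▸ hDk4 2) hSZnn hSDnn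
  · rcases hFin aj with rfl | rfl | rfl
    · rcases d with d0 | dj
      · have key : Zvf (Sum.inr (Sum.inr (Sum.inl (0 : Fin 3)))) (Dgoodvf (Sum.inl d0) u) p - Dgoodvf (Sum.inl d0) (Zvf (Sum.inr (Sum.inr (Sum.inl (0 : Fin 3)))) u) p = 0 := by
          simp only [Zvf_r0_fun, Dgoodvf_0_fun]
          simp only [fderiv_D0_apply hu p hp, fderiv_rot_apply hu p, Hd_def]
          simp only [Fin.sum_univ_three, et1, et2, ev1, ev2, Fin.reduceEq, reduceIte]
          norm_num [hst, hs10, hs20, hs21]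
          all_goals ring
        rw [key]
        simp only [abs_zero]
        nlinarith [mul_nonneg hn hSZnn, hSDnn]
      · rcases hFin dj with rfl | rfl | rfl
        · have key : Zvf (Sum.inr (Sum.inr (Sum.inl (0 : Fin 3)))) (Dgoodvf (Sum.inr (0 : Fin 3)) u) p - Dgoodvf (Sum.inr (0 : Fin 3)) (Zvf (Sum.inr (Sum.inr (Sum.inl (0 : Fin 3)))) u) p = 0 := by
            simp only [Zvf_r0_fun, Dgoodvf_j_fun]
            simp only [fderiv_Dj_apply hu p hp, fderiv_rot_apply hu p, Hd_def]
            simp only [Fin.sum_univ_three, et1, et2, ev1, ev2, Fin.reduceEq, reduceIte]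
            norm_num [hst, hs10, hs20, hs21]
            all_goals ring
          rw [key]
          simp only [abs_zero]
          nlinarith [mul_nonneg hn hSZnn, hSDnn]
        · have key : Zvf (Sum.inr (Sum.inr (Sum.inl (0 : Fin 3)))) (Dgoodvf (Sum.inr (1 : Fin 3)) u) p - Dgoodvf (Sum.inr (1 : Fin 3)) (Zvf (Sum.inr (Sum.inr (Sum.inl (0 : Fin 3)))) u) p = -(fderiv ℝ u p (ev 2) - (p.2 2 * ‖p.2‖⁻¹) * (‖p.2‖⁻¹ * (p.2 0 * fderiv ℝ u p (ev 0) + p.2 1 * fderiv ℝ u p (ev 1) + p.2 2 * fderiv ℝ u p (ev 2)))) := by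
            simp only [Zvf_r0_fun, Dgoodvf_j_fun]
            simp only [fderiv_Dj_apply hu p hp, fderiv_rot_apply hu p, Hd_def]
            simp only [Fin.sum_univ_three, et1, et2, ev1, ev2, Fin.reduceEq, reduceIte]
            norm_num [hst, hs10, hs20, hs21]
            all_goals ring
          rw [key]
          rw [← hDval 2]
          rw [abs_neg]
          nlinarith [hDle (Sum.inr 2), mul_nonneg hn hSZnn, hSDnn]
        · have key : Zvf (Sum.inr (Sum.inr (Sum.inl (0 : Fin 3)))) (Dgoodvf (Sum.inr (2 : Fin 3)) u) p - Dgoodvf (Sum.inr (2 : Fin 3)) (Zvf (Sum.inr (Sum.inr (Sum.inl (0 : Fin 3)))) u) p = fderiv ℝ u p (ev 1) - (p.2 1 * ‖p.2‖⁻¹) * (‖p.2‖⁻¹ * (p.2 0 * fderiv ℝ u p (ev 0) + p.2 1 * fderiv ℝ u p (ev 1) + p.2 2 * fderiv ℝ u p (ev 2))) := by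
            simp only [Zvf_r0_fun, Dgoodvf_j_fun]
            simp only [fderiv_Dj_apply hu p hp, fderiv_rot_apply hu p, Hd_def]
            simp only [Fin.sum_univ_three, et1, et2, ev1, ev2, Fin.reduceEq, reduceIte]
            norm_num [hst, hs10, hs20, hs21]
            all_goals ring
          rw [key]
          rw [← hDval 1]
          nlinarith [hDle (Sum.inr 1), mul_nonneg hn hSZnn, hSDnn]
    · rcases d with d0 | dj
      · have key : Zvf (Sum.inr (Sum.inr (Sum.inl (1 : Fin 3)))) (Dgoodvf (Sum.inl d0) u) p - Dgoodvf (Sum.inl d0) (Zvf (Sum.inr (Sum.inr (Sum.inl (1 : Fin 3)))) u) p = 0 := by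
          simp only [Zvf_r1_fun, Dgoodvf_0_fun]
          simp only [fderiv_D0_apply hu p hp, fderiv_rot_apply hu p, Hd_def]
          simp only [Fin.sum_univ_three, et1, et2, ev1, ev2, Fin.reduceEq, reduceIte]
          norm_num [hst, hs10, hs20, hs21]
          all_goals ring
        rw [key]
        simp only [abs_zero]
        nlinarith [mul_nonneg hn hSZnn, hSDnn]
      · rcases hFin dj with rfl | rfl | rfl
        · have key : Zvf (Sum.inr (Sum.inr (Sum.inl (1 : Fin 3)))) (Dgoodvf (Sum.inr (0 : Fin 3)) u) p - Dgoodvf (Sum.inr (0 : Fin 3)) (Zvf (Sum.inr (Sum.inr (Sum.inl (1 : Fin 3)))) u) p = fderiv ℝ u p (ev 2) - (p.2 2 * ‖p.2‖⁻¹) * (‖p.2‖⁻¹ * (p.2 0 * fderiv ℝ u p (ev 0) + p.2 1 * fderiv ℝ u p (ev 1) + p.2 2 * fderiv ℝ u p (ev 2))) := by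
            simp only [Zvf_r1_fun, Dgoodvf_j_fun]
            simp only [fderiv_Dj_apply hu p hp, fderiv_rot_apply hu p, Hd_def]
            simp only [Fin.sum_univ_three, et1, et2, ev1, ev2, Fin.reduceEq, reduceIte]
            norm_num [hst, hs10, hs20, hs21]
            all_goals ring
          rw [key]
          rw [← hDval 2]
          nlinarith [hDle (Sum.inr 2), mul_nonneg hn hSZnn, hSDnn]
        · have key : Zvf (Sum.inr (Sum.inr (Sum.inl (1 : Fin 3)))) (Dgoodvf (Sum.inr (1 : Fin 3)) u) p - Dgoodvf (Sum.inr (1 : Fin 3)) (Zvf (Sum.inr (Sum.inr (Sum.inl (1 : Fin 3)))) u) p = 0 := by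
            simp only [Zvf_r1_fun, Dgoodvf_j_fun]
            simp only [fderiv_Dj_apply hu p hp, fderiv_rot_apply hu p, Hd_def]
            simp only [Fin.sum_univ_three, et1, et2, ev1, ev2, Fin.reduceEq, reduceIte]
            norm_num [hst, hs10, hs20, hs21]
            all_goals ring
          rw [key]
          simp only [abs_zero]
          nlinarith [mul_nonneg hn hSZnn, hSDnn]
        · have key : Zvf (Sum.inr (Sum.inr (Sum.inl (1 : Fin 3)))) (Dgoodvf (Sum.inr (2 : Fin 3)) u) p - Dgoodvf (Sum.inr (2 : Fin 3)) (Zvf (Sum.inr (Sum.inr (Sum.inl (1 : Fin 3)))) u) p = -(fderiv ℝ u p (ev 0) - (p.2 0 * ‖p.2‖⁻¹) * (‖p.2‖⁻¹ * (p.2 0 * fderiv ℝ u p (ev 0) + p.2 1 * fderiv ℝ u p (ev 1) + p.2 2 * fderiv ℝ u p (ev 2)))) := by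
            simp only [Zvf_r1_fun, Dgoodvf_j_fun]
            simp only [fderiv_Dj_apply hu p hp, fderiv_rot_apply hu p, Hd_def]
            simp only [Fin.sum_univ_three, et1, et2, ev1, ev2, Fin.reduceEq, reduceIte]
            norm_num [hst, hs10, hs20, hs21]
            all_goals ring
          rw [key]
          rw [← hDval 0]
          rw [abs_neg]
          nlinarith [hDle (Sum.inr 0), mul_nonneg hn hSZnn, hSDnn]
    · rcases d with d0 | dj
      · have key : Zvf (Sum.inr (Sum.inr (Sum.inl (2 : Fin 3)))) (Dgoodvf (Sum.inl d0) u) p - Dgoodvf (Sum.inl d0) (Zvf (Sum.inr (Sum.inr (Sum.inl (2 : Fin 3)))) u) p = 0 := by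
          simp only [Zvf_r2_fun, Dgoodvf_0_fun]
          simp only [fderiv_D0_apply hu p hp, fderiv_rot_apply hu p, Hd_def]
          simp only [Fin.sum_univ_three, et1, et2, ev1, ev2, Fin.reduceEq, reduceIte]
          norm_num [hst, hs10, hs20, hs21]
          all_goals ring
        rw [key]
        simp only [abs_zero]
        nlinarith [mul_nonneg hn hSZnn, hSDnn]
      · rcases hFin dj with rfl | rfl | rfl
        · have key : Zvf (Sum.inr (Sum.inr (Sum.inl (2 : Fin 3)))) (Dgoodvf (Sum.inr (0 : Fin 3)) u) p - Dgoodvf (Sum.inr (0 : Fin 3)) (Zvf (Sum.inr (Sum.inr (Sum.inl (2 : Fin 3)))) u) p = -(fderiv ℝ u p (ev 1) - (p.2 1 * ‖p.2‖⁻¹) * (‖p.2‖⁻¹ * (p.2 0 * fderiv ℝ u p (ev 0) + p.2 1 * fderiv ℝ u p (ev 1) + p.2 2 * fderiv ℝ u p (ev 2)))) := by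
            simp only [Zvf_r2_fun, Dgoodvf_j_fun]
            simp only [fderiv_Dj_apply hu p hp, fderiv_rot_apply hu p, Hd_def]
            simp only [Fin.sum_univ_three, et1, et2, ev1, ev2, Fin.reduceEq, reduceIte]
            norm_num [hst, hs10, hs20, hs21]
            all_goals ring
          rw [key]
          rw [← hDval 1]
          rw [abs_neg]
          nlinarith [hDle (Sum.inr 1), mul_nonneg hn hSZnn, hSDnn]
        · have key : Zvf (Sum.inr (Sum.inr (Sum.inl (2 : Fin 3)))) (Dgoodvf (Sum.inr (1 : Fin 3)) u) p - Dgoodvf (Sum.inr (1 : Fin 3)) (Zvf (Sum.inr (Sum.inr (Sum.inl (2 : Fin 3)))) u) p = fderiv ℝ u p (ev 0) - (p.2 0 * ‖p.2‖⁻¹) * (‖p.2‖⁻¹ * (p.2 0 * fderiv ℝ u p (ev 0) + p.2 1 * fderiv ℝ u p (ev 1) + p.2 2 * fderiv ℝ u p (ev 2))) := by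
            simp only [Zvf_r2_fun, Dgoodvf_j_fun]
            simp only [fderiv_Dj_apply hu p hp, fderiv_rot_apply hu p, Hd_def]
            simp only [Fin.sum_univ_three, et1, et2, ev1, ev2, Fin.reduceEq, reduceIte]
            norm_num [hst, hs10, hs20, hs21]
            all_goals ring
          rw [key]
          rw [← hDval 0]
          nlinarith [hDle (Sum.inr 0), mul_nonneg hn hSZnn, hSDnn]
        · have key : Zvf (Sum.inr (Sum.inr (Sum.inl (2 : Fin 3)))) (Dgoodvf (Sum.inr (2 : Fin 3)) u) p - Dgoodvf (Sum.inr (2 : Fin 3)) (Zvf (Sum.inr (Sum.inr (Sum.inl (2 : Fin 3)))) u) p = 0 := by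
            simp only [Zvf_r2_fun, Dgoodvf_j_fun]
            simp only [fderiv_Dj_apply hu p hp, fderiv_rot_apply hu p, Hd_def]
            simp only [Fin.sum_univ_three, et1, et2, ev1, ev2, Fin.reduceEq, reduceIte]
            norm_num [hst, hs10, hs20, hs21]
            all_goals ring
          rw [key]
          simp only [abs_zero]
          nlinarith [mul_nonneg hn hSZnn, hSDnn]
  · rcases d with d0 | dj
    · have key : Zvf (Sum.inr (Sum.inr (Sum.inr as'))) (Dgoodvf (Sum.inl d0) u) p - Dgoodvf (Sum.inl d0) (Zvf (Sum.inr (Sum.inr (Sum.inr as'))) u) p = -(fderiv ℝ u p et + ‖p.2‖⁻¹ * (p.2 0 * fderiv ℝ u p (ev 0) + p.2 1 * fderiv ℝ u p (ev 1) + p.2 2 * fderiv ℝ u p (ev 2))) := by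
        simp only [Zvf_s_fun, Dgoodvf_0_fun]
        simp only [fderiv_D0_apply hu p hp, fderiv_Svf_apply hu p, Hd_def]
        simp only [Fin.sum_univ_three, et1, et2, ev1, ev2, Fin.reduceEq, reduceIte]
        norm_num [hst, hs10, hs20, hs21]
        all_goals linear_combination (-(‖p.2‖⁻¹ * (p.2 0 * fderiv ℝ u p (ev 0) + p.2 1 * fderiv ℝ u p (ev 1) + p.2 2 * fderiv ℝ u p (ev 2)))) * hr2inv
      rw [key]
      rw [← hD0val, abs_neg]
      nlinarith [hDle (Sum.inl ()), mul_nonneg hn hSZnn, hSDnn]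
    · rcases hFin dj with rfl | rfl | rfl
      · have key : Zvf (Sum.inr (Sum.inr (Sum.inr as'))) (Dgoodvf (Sum.inr (0 : Fin 3)) u) p - Dgoodvf (Sum.inr (0 : Fin 3)) (Zvf (Sum.inr (Sum.inr (Sum.inr as'))) u) p = -(fderiv ℝ u p (ev 0) - (p.2 0 * ‖p.2‖⁻¹) * (‖p.2‖⁻¹ * (p.2 0 * fderiv ℝ u p (ev 0) + p.2 1 * fderiv ℝ u p (ev 1) + p.2 2 * fderiv ℝ u p (ev 2)))) := by
          simp only [Zvf_s_fun, Dgoodvf_j_fun]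
          simp only [fderiv_Dj_apply hu p hp, fderiv_Svf_apply hu p, Hd_def]
          simp only [Fin.sum_univ_three, et1, et2, ev1, ev2, Fin.reduceEq, reduceIte]
          norm_num [hst, hs10, hs20, hs21]
          all_goals linear_combination (2 * p.2 0 * (‖p.2‖⁻¹ * ‖p.2‖⁻¹) * (p.2 0 * fderiv ℝ u p (ev 0) + p.2 1 * fderiv ℝ u p (ev 1) + p.2 2 * fderiv ℝ u p (ev 2))) * hr2inv
        rw [key]
        rw [← hDval 0, abs_neg]
        nlinarith [hDle (Sum.inr 0), mul_nonneg hn hSZnn, hSDnn]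
      · have key : Zvf (Sum.inr (Sum.inr (Sum.inr as'))) (Dgoodvf (Sum.inr (1 : Fin 3)) u) p - Dgoodvf (Sum.inr (1 : Fin 3)) (Zvf (Sum.inr (Sum.inr (Sum.inr as'))) u) p = -(fderiv ℝ u p (ev 1) - (p.2 1 * ‖p.2‖⁻¹) * (‖p.2‖⁻¹ * (p.2 0 * fderiv ℝ u p (ev 0) + p.2 1 * fderiv ℝ u p (ev 1) + p.2 2 * fderiv ℝ u p (ev 2)))) := by
          simp only [Zvf_s_fun, Dgoodvf_j_fun]
          simp only [fderiv_Dj_apply hu p hp, fderiv_Svf_apply hu p, Hd_def]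
          simp only [Fin.sum_univ_three, et1, et2, ev1, ev2, Fin.reduceEq, reduceIte]
          norm_num [hst, hs10, hs20, hs21]
          all_goals linear_combination (2 * p.2 1 * (‖p.2‖⁻¹ * ‖p.2‖⁻¹) * (p.2 0 * fderiv ℝ u p (ev 0) + p.2 1 * fderiv ℝ u p (ev 1) + p.2 2 * fderiv ℝ u p (ev 2))) * hr2inv
        rw [key]
        rw [← hDval 1, abs_neg]
        nlinarith [hDle (Sum.inr 1), mul_nonneg hn hSZnn, hSDnn]
      · have key : Zvf (Sum.inr (Sum.inr (Sum.inr as'))) (Dgoodvf (Sum.inr (2 : Fin 3)) u) p - Dgoodvf (Sum.inr (2 : Fin 3)) (Zvf (Sum.inr (Sum.inr (Sum.inr as'))) u) p = -(fderiv ℝ u p (ev 2) - (p.2 2 * ‖p.2‖⁻¹) * (‖p.2‖⁻¹ * (p.2 0 * fderiv ℝ u p (ev 0) + p.2 1 * fderiv ℝ u p (ev 1) + p.2 2 * fderiv ℝ u p (ev 2)))) := by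
          simp only [Zvf_s_fun, Dgoodvf_j_fun]
          simp only [fderiv_Dj_apply hu p hp, fderiv_Svf_apply hu p, Hd_def]
          simp only [Fin.sum_univ_three, et1, et2, ev1, ev2, Fin.reduceEq, reduceIte]
          norm_num [hst, hs10, hs20, hs21]
          all_goals linear_combination (2 * p.2 2 * (‖p.2‖⁻¹ * ‖p.2‖⁻¹) * (p.2 0 * fderiv ℝ u p (ev 0) + p.2 1 * fderiv ℝ u p (ev 1) + p.2 2 * fderiv ℝ u p (ev 2))) * hr2inv
        rw [key]
        rw [← hDval 2, abs_neg]
        nlinarith [hDle (Sum.inr 2), mul_nonneg hn hSZnn, hSDnn]
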